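/- arXiv:2605.02499 — 2 statements merged into one kernel-verified Lean document; each statement's English description precedes it below -/
import Mathlib

section
/- Appendix double-counting identity (equality of the with- and without-replacement counts): Let N, n, m, k ∈ ℕ with n ≤ N and k ≤ m. Then binom(N−n, k) · ∑_{j=k}^{m} Surj(m,j) · binom(n, j−k) = binom(N−n, k) · ∑_{ℓ=k}^{m} binom(m,ℓ) · Surj(ℓ,k) · n^{m−ℓ}. (This is the identity ∑_{j=k}^{min(m,N)} N^{\underline{j}} S(m,j) binom(N−n,k) binom(n,j−k) / binom(N,j) = C^n_{mk} from the appendix, after using N^{\underline{j}}/binom(N,j) = j! and j!·S(ℓ,j) = Surj(ℓ,j); terms with j > N or j > n+k vanish because the corresponding binomial coefficient is zero.) -/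
open scoped BigOperators

/-- `surjCount l j`: number of surjective functions from `Fin l` onto `Fin j`. -/
def surjCount (l j : ℕ) : ℕ :=
  (Finset.univ.filter fun f : Fin l → Fin j => Function.Surjective f).card

open Finset

section Aux

lemma surjCount_eq_card (α β : Type*) [Fintype α] [DecidableEq α] [Fintype β] [DecidableEq β] :
    (Finset.univ.filter fun f : α → β => Function.Surjective f).card
      = surjCount (Fintype.card α) (Fintype.card β) := by
  classical
  rw [surjCount, ← Fintype.card_subtype, ← Fintype.card_subtype]
  exact Fintype.card_congr
    (((Fintype.equivFin α).arrowCongr (Fintype.equivFin β)).subtypeEquiv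
      (fun f => by
        show Function.Surjective f ↔
          Function.Surjective (⇑(Fintype.equivFin β) ∘ f ∘ ⇑(Fintype.equivFin α).symm)
        rw [Equiv.comp_surjective, Equiv.surjective_comp]))

lemma surjCount_eq_zero {l j : ℕ} (h : l < j) : surjCount l j = 0 := by
  rw [surjCount, Finset.card_eq_zero, Finset.filter_eq_empty_iff]
  intro f _ hf
  have := Fintype.card_le_of_surjective f hf
  simp only [Fintype.card_fin] at this
  omega

lemma card_filter_image_eq {α β : Type*} [Fintype α] [DecidableEq α] [Fintype β] [DecidableEq β]
    (s : Finset β) :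
    ((Finset.univ : Finset (α → β)).filter fun f => Finset.image f Finset.univ = s).card
      = surjCount (Fintype.card α) s.card := by
  classical
  rw [← Fintype.card_coe s, ← surjCount_eq_card α s]
  refine Finset.card_bij'
    (fun f hf a => (⟨f a, by
      have h := (Finset.mem_filter.1 hf).2
      rw [← h]; exact Finset.mem_image_of_mem f (Finset.mem_univ a)⟩ : s))
    (fun g _ a => (g a : β)) ?_ ?_ ?_ ?_
  · intro f hf
    rw [Finset.mem_filter]
    refine ⟨Finset.mem_univ _, fun b => ?_⟩
    have hb : (b : β) ∈ Finset.image f Finset.univ := by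
      rw [(Finset.mem_filter.1 hf).2]; exact b.2
    obtain ⟨a, -, ha⟩ := Finset.mem_image.1 hb
    exact ⟨a, Subtype.ext ha⟩
  · intro g hg
    rw [Finset.mem_filter]
    refine ⟨Finset.mem_univ _, ?_⟩
    ext b
    simp only [Finset.mem_image, Finset.mem_univ, true_and]
    constructor
    · rintro ⟨a, rfl⟩; exact (g a).2
    · intro hb
      obtain ⟨a, ha⟩ := (Finset.mem_filter.1 hg).2 ⟨b, hb⟩
      exact ⟨a, by rw [ha]⟩
  · intro f hf; rfl
  · intro g hg; funext a; exact Subtype.ext rfl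

lemma lemA (p x : ℕ) : x ^ p = ∑ t ∈ Finset.range (x + 1), x.choose t * surjCount p t := by
  classical
  have h1 : x ^ p = (Finset.univ : Finset (Fin p → Fin x)).card := by
    simp [Finset.card_univ]
  rw [h1, Finset.card_eq_sum_card_fiberwise
      (f := fun f : Fin p → Fin x => Finset.image f Finset.univ)
      (t := (Finset.univ : Finset (Fin x)).powerset)
      (fun f _ => Finset.mem_powerset.2 (Finset.subset_univ _))]
  have h2 : ∀ s ∈ (Finset.univ : Finset (Fin x)).powerset,
      ((Finset.univ : Finset (Fin p → Fin x)).filter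
        fun f => Finset.image f Finset.univ = s).card = surjCount p s.card := by
    intro s _
    rw [card_filter_image_eq s, Fintype.card_fin]
  rw [Finset.sum_congr rfl h2, Finset.sum_powerset]
  have h3 : ((Finset.univ : Finset (Fin x)).card) = x := by simp
  rw [h3]
  refine Finset.sum_congr rfl fun t _ => ?_
  rw [Finset.sum_powersetCard t Finset.univ (fun j => surjCount p j), h3, smul_eq_mul]

lemma lemA' (p x M : ℕ) (h : p ≤ M) :
    x ^ p = ∑ t ∈ Finset.range (M + 1), x.choose t * surjCount p t := by
  rcases le_total M x with hMx | hxM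
  · rw [lemA p x, ← Finset.sum_subset (Finset.range_subset_range.2 (by omega) :
      Finset.range (M+1) ⊆ Finset.range (x+1))]
    intro t ht hnt
    have : p < t := by
      simp only [Finset.mem_range] at ht hnt; omega
    rw [surjCount_eq_zero this, mul_zero]
  · rw [lemA p x, ← Finset.sum_subset (Finset.range_subset_range.2 (by omega) :
      Finset.range (x+1) ⊆ Finset.range (M+1))]
    intro t ht hnt
    have : x < t := by
      simp only [Finset.mem_range] at ht hnt; omega
    rw [Nat.choose_eq_zero_of_lt this, zero_mul]

lemma card_fiber_leftset {α β₁ β₂ : Type*} [Fintype α] [DecidableEq α]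
    [Fintype β₁] [DecidableEq β₁] [Fintype β₂] [DecidableEq β₂] (s : Finset α) :
    ((Finset.univ : Finset (α → β₁ ⊕ β₂)).filter fun f =>
        Function.Surjective f ∧ Finset.univ.filter (fun a => (f a).isLeft) = s).card
      = surjCount s.card (Fintype.card β₁)
        * surjCount (Fintype.card α - s.card) (Fintype.card β₂) := by
  classical
  have hs : ∀ (f : α → β₁ ⊕ β₂), (Finset.univ.filter (fun a => (f a).isLeft) = s) →
      ∀ a : α, (f a).isLeft = (a ∈ s : Bool) := by
    intro f hf a
    rw [← hf]
    by_cases h : (f a).isLeft = true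
    · simp [h]
    · simp only [Bool.not_eq_true] at h
      simp [h]
  rw [← Finset.card_compl s, ← Fintype.card_coe (sᶜ : Finset α),
      ← surjCount_eq_card (↥(sᶜ : Finset α)) β₂, ← Fintype.card_coe s,
      ← surjCount_eq_card (↥s) β₁, ← Finset.card_product]
  refine Finset.card_bij'
    (fun f hf => (fun a : s => (f a).getLeft (by
        have := hs f (Finset.mem_filter.1 hf).2.2 a
        rw [this]; simpa using a.2),
      fun a : (sᶜ : Finset α) => (f a).getRight (by
        have := hs f (Finset.mem_filter.1 hf).2.2 a
        have ha : (a : α) ∉ s := Finset.mem_compl.1 a.2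
        simp only [ha] at this
        simpa [Sum.isRight_iff, ← Sum.not_isLeft] using this)))
    (fun p _ => fun a : α => if ha : a ∈ s then Sum.inl (p.1 ⟨a, ha⟩)
      else Sum.inr (p.2 ⟨a, by simpa using ha⟩)) ?_ ?_ ?_ ?_
  · intro f hf
    obtain ⟨-, hsurj, hset⟩ := Finset.mem_filter.1 hf
    rw [Finset.mem_product]
    constructor
    · rw [Finset.mem_filter]
      refine ⟨Finset.mem_univ _, fun b => ?_⟩
      obtain ⟨a, ha⟩ := hsurj (Sum.inl b)
      have hal : (f a).isLeft := by rw [ha]; rfl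
      have has : a ∈ s := by
        have := hs f hset a
        rw [this] at hal; simpa using hal
      exact ⟨⟨a, has⟩, by simp [ha]⟩
    · rw [Finset.mem_filter]
      refine ⟨Finset.mem_univ _, fun b => ?_⟩
      obtain ⟨a, ha⟩ := hsurj (Sum.inr b)
      have hal : ¬ (f a).isLeft := by rw [ha]; simp
      have has : a ∉ s := by
        intro h
        have := hs f hset a
        simp [h] at this
        exact hal this
      exact ⟨⟨a, by simpa using has⟩, by simp [ha]⟩
  · intro p hp
    rw [Finset.mem_product] at hp
    obtain ⟨hp1, hp2⟩ := hp
    rw [Finset.mem_filter]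
    refine ⟨Finset.mem_univ _, ?_, ?_⟩
    · rintro (b | b)
      · obtain ⟨⟨a, ha⟩, hab⟩ := (Finset.mem_filter.1 hp1).2 b
        exact ⟨a, by simp [ha, hab]⟩
      · obtain ⟨⟨a, ha⟩, hab⟩ := (Finset.mem_filter.1 hp2).2 b
        have ha' : a ∉ s := by simpa using ha
        exact ⟨a, by simp [ha', hab]⟩
    · ext a
      by_cases ha : a ∈ s <;> simp [ha]
  · intro f hf
    funext a
    by_cases ha : a ∈ s
    · simp only [ha, dif_pos]
      exact (Sum.inl_getLeft _ _).symm ▸ rfl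
    · simp only [ha, dif_neg, not_false_iff]
      exact (Sum.inr_getRight _ _).symm ▸ rfl
  · intro p hp
    ext a
    · have ha : (a : α) ∈ s := a.2
      simp [ha]
    · have ha : (a : α) ∉ s := Finset.mem_compl.1 a.2
      simp [ha]

lemma lemB (m k t : ℕ) :
    surjCount m (k + t)
      = ∑ l ∈ Finset.range (m + 1),
          m.choose l * (surjCount l k * surjCount (m - l) t) := by
  classical
  have h0 : surjCount m (k + t)
      = ((Finset.univ : Finset (Fin m → Fin k ⊕ Fin t)).filter
          fun f => Function.Surjective f).card := by
    rw [surjCount_eq_card (Fin m) (Fin k ⊕ Fin t)]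
    simp
  rw [h0, Finset.card_eq_sum_card_fiberwise
      (f := fun f : Fin m → Fin k ⊕ Fin t => Finset.univ.filter fun a => (f a).isLeft)
      (t := (Finset.univ : Finset (Fin m)).powerset)
      (fun f _ => Finset.mem_powerset.2 (Finset.subset_univ _))]
  have h2 : ∀ s ∈ (Finset.univ : Finset (Fin m)).powerset,
      (((Finset.univ : Finset (Fin m → Fin k ⊕ Fin t)).filter
          fun f => Function.Surjective f).filter
        fun f => Finset.univ.filter (fun a => (f a).isLeft) = s).card
      = surjCount s.card k * surjCount (m - s.card) t := by
    intro s _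
    rw [Finset.filter_filter, card_fiber_leftset s]
    simp
  rw [Finset.sum_congr rfl h2, Finset.sum_powerset]
  have h3 : ((Finset.univ : Finset (Fin m)).card) = m := by simp
  rw [h3]
  refine Finset.sum_congr rfl fun l _ => ?_
  rw [Finset.sum_powersetCard l Finset.univ
      (fun j => surjCount j k * surjCount (m - j) t), h3, smul_eq_mul]

end Aux

/-- **Appendix double-counting identity** (equality of the with- and
without-replacement counts). -/
theorem double_counting (N n m k : ℕ) (hn : n ≤ N) (hk : k ≤ m) :
    (N - n).choose k * ∑ j ∈ Finset.Icc k m, surjCount m j * n.choose (j - k)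
      = (N - n).choose k *
          ∑ l ∈ Finset.Icc k m, m.choose l * surjCount l k * n ^ (m - l) := by
  congr 1
  -- reindex the LHS sum
  have hre : ∑ j ∈ Finset.Icc k m, surjCount m j * n.choose (j - k)
      = ∑ t ∈ Finset.range (m - k + 1), surjCount m (k + t) * n.choose t := by
    refine Finset.sum_nbij' (fun j => j - k) (fun t => k + t) ?_ ?_ ?_ ?_ ?_
    · intro j hj; simp only [Finset.mem_Icc] at hj; simp only [Finset.mem_range]; omega
    · intro t ht; simp only [Finset.mem_range] at ht; simp only [Finset.mem_Icc]; omega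
    · intro j hj; simp only [Finset.mem_Icc] at hj
      show k + (j - k) = j; omega
    · intro t ht
      show k + t - k = t; omega
    · intro j hj
      simp only [Finset.mem_Icc] at hj
      show surjCount m j * n.choose (j - k) = surjCount m (k + (j - k)) * n.choose (j - k)
      rw [Nat.add_sub_cancel' hj.1]
  rw [hre]
  have hB : ∀ t, surjCount m (k + t) * n.choose t
      = ∑ l ∈ Finset.Icc k m, m.choose l * surjCount l k * (surjCount (m - l) t * n.choose t) := by
    intro t
    rw [lemB m k t, Finset.sum_mul]
    rw [Finset.sum_congr rfl (fun l _ => by ring :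
      ∀ l ∈ Finset.range (m + 1),
        m.choose l * (surjCount l k * surjCount (m - l) t) * n.choose t
          = m.choose l * surjCount l k * (surjCount (m - l) t * n.choose t))]
    refine (Finset.sum_subset ?_ ?_).symm
    · intro l hl; simp only [Finset.mem_Icc] at hl
      simp only [Finset.mem_range]; omega
    · intro l hl hnl
      simp only [Finset.mem_range] at hl
      simp only [Finset.mem_Icc] at hnl
      have : l < k := by omega
      rw [surjCount_eq_zero this]
      ring
  calc ∑ t ∈ Finset.range (m - k + 1), surjCount m (k + t) * n.choose t
      = ∑ t ∈ Finset.range (m - k + 1), ∑ l ∈ Finset.Icc k m,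
          m.choose l * surjCount l k * (surjCount (m - l) t * n.choose t) := by
        exact Finset.sum_congr rfl fun t _ => hB t
    _ = ∑ l ∈ Finset.Icc k m, ∑ t ∈ Finset.range (m - k + 1),
          m.choose l * surjCount l k * (surjCount (m - l) t * n.choose t) :=
        Finset.sum_comm
    _ = ∑ l ∈ Finset.Icc k m, m.choose l * surjCount l k * n ^ (m - l) := by
        refine Finset.sum_congr rfl fun l hl => ?_
        simp only [Finset.mem_Icc] at hl
        rw [← Finset.mul_sum]
        congr 1
        rw [lemA' (m - l) n (m - k) (by omega)]
        exact Finset.sum_congr rfl fun t _ => by ring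
end

section
/- Equality of sampling-with-replacement and sampling-without-replacement selection rates (equation (4.1)/(eq.ftw.with_without)): Let N, n, k ∈ ℕ with n ≤ N and 1 ≤ k, and let (s_m)_{m≥1} be a summable sequence of nonnegative reals. Define s̃_j := ∑_{m≥1} s_m · p^0_{mj} for j ∈ {1,…,N}. Then ∑_{j=k}^{N} s̃_j · q^n_{jk} = ∑_{m≥1} s_m · p^n_{mk}, where the right-hand side is a tsum (all terms with m < k vanish since p^n_{mk} = 0 for m < k). -/
open scoped BigOperators
open Finset

noncomputable section

/-- `pp N n m j` is the probability `p^n_{mj}` that, when sampling `m` times with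
replacement from `Fin N`, exactly `j` of the last `N - n` elements of `Fin N`
(those with indices in `{n, …, N-1}`) lie in the range of the sample. -/
def pp (N n m j : ℕ) : ℝ :=
  ((Finset.univ.filter fun f : Fin m → Fin N =>
      (Finset.univ.filter fun x : Fin N => n ≤ (x : ℕ) ∧ ∃ y, f y = x).card = j).card : ℝ)
    / (N : ℝ) ^ m

/-- The range of `f` as a finset. -/
private def Rng {m N : ℕ} (f : Fin m → Fin N) : Finset (Fin N) :=
  Finset.univ.filter fun x => ∃ y, f y = x

/-- The last `N - n` elements of `Fin N`. -/
private def Tail (N n : ℕ) : Finset (Fin N) := Finset.univ.filter fun x => n ≤ (x : ℕ)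

private lemma tail_card {N n : ℕ} (hn : n ≤ N) : (Tail N n).card = N - n := by
  have h1 : (Finset.univ.filter fun x : Fin N => ¬ n ≤ (x : ℕ)).card = n := by
    have himg : Finset.image Fin.val (Finset.univ.filter fun x : Fin N => ¬ n ≤ (x : ℕ))
        = Finset.range n := by
      ext a
      simp only [mem_image, mem_filter, mem_univ, true_and, mem_range, not_le]
      constructor
      · rintro ⟨x, hx, rfl⟩; exact hx
      · intro ha; exact ⟨⟨a, lt_of_lt_of_le ha hn⟩, ha, rfl⟩
    have := congrArg Finset.card himg
    rwa [Finset.card_image_of_injective _ Fin.val_injective, Finset.card_range] at this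
  have h2 := Finset.card_filter_add_card_filter_not
    (s := (Finset.univ : Finset (Fin N))) (p := fun x : Fin N => n ≤ (x : ℕ))
  simp only [Finset.card_univ, Fintype.card_fin] at h2
  unfold Tail
  omega

private lemma tail_compl_card {N n : ℕ} (hn : n ≤ N) : ((Tail N n)ᶜ).card = n := by
  have := tail_card (N := N) hn
  rw [Finset.card_compl, Fintype.card_fin, this]
  omega

private lemma rng_comp {m N : ℕ} (σ : Equiv.Perm (Fin N)) (f : Fin m → Fin N) :
    Rng (σ ∘ f) = (Rng f).image σ := by
  ext x
  simp only [Rng, mem_filter, mem_univ, true_and, mem_image, Function.comp_apply]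
  constructor
  · rintro ⟨y, rfl⟩; exact ⟨f y, ⟨y, rfl⟩, rfl⟩
  · rintro ⟨z, ⟨y, rfl⟩, rfl⟩; exact ⟨y, rfl⟩

/-- The number of `f : Fin m → Fin N` with range exactly `T` only depends on `#T`. -/
private lemma A_invariant {N m : ℕ} {T T' : Finset (Fin N)} (h : T.card = T'.card) :
    (Finset.univ.filter fun f : Fin m → Fin N => Rng f = T).card
      = (Finset.univ.filter fun f : Fin m → Fin N => Rng f = T').card := by
  classical
  have hc : (Tᶜ).card = (T'ᶜ).card := by
    rw [Finset.card_compl, Finset.card_compl, h]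
  let e1 : {x : Fin N // x ∈ T} ≃ {x : Fin N // x ∈ T'} := Finset.equivOfCardEq h
  let e2 : {x : Fin N // ¬ x ∈ T} ≃ {x : Fin N // ¬ x ∈ T'} :=
    ((Equiv.subtypeEquivRight (fun x => (Finset.mem_compl).symm)).trans
      ((Finset.equivOfCardEq hc).trans (Equiv.subtypeEquivRight (fun x => Finset.mem_compl))))
  let σ : Equiv.Perm (Fin N) := Equiv.subtypeCongr e1 e2
  have hσ : ∀ x, σ x ∈ T' ↔ x ∈ T := by
    intro x
    by_cases hx : x ∈ T
    · simp only [σ, Equiv.subtypeCongr, Equiv.trans_apply, Equiv.sumCompl_symm_apply_of_pos hx,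
        Equiv.sumCongr_apply, Sum.map_inl, Equiv.sumCompl_apply_inl]
      simp [hx, (e1 ⟨x, hx⟩).2]
    · simp only [σ, Equiv.subtypeCongr, Equiv.trans_apply, Equiv.sumCompl_symm_apply_of_neg hx,
        Equiv.sumCongr_apply, Sum.map_inr, Equiv.sumCompl_apply_inr]
      simp [hx, (e2 ⟨x, hx⟩).2]
  have himg : T.image σ = T' := by
    apply Finset.eq_of_subset_of_card_le
    · intro y hy
      obtain ⟨x, hx, rfl⟩ := Finset.mem_image.1 hy
      exact (hσ x).2 hx
    · rw [Finset.card_image_of_injective _ σ.injective, h]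
  have himg' : T'.image σ.symm = T := by
    rw [← himg, Finset.image_image]
    simp
  apply Finset.card_nbij' (fun f => σ ∘ f) (fun g => σ.symm ∘ g)
  · intro f hf
    simp only [Finset.mem_coe, mem_filter, mem_univ, true_and] at hf ⊢
    rw [rng_comp, hf, himg]
  · intro g hg
    simp only [Finset.mem_coe, mem_filter, mem_univ, true_and] at hg ⊢
    rw [rng_comp, hg, himg']
  · intro f _; ext y; simp
  · intro g _; ext y; simp

/-- Fiberwise decomposition of a count of functions according to their range. -/
private lemma cnt_fiber {N m : ℕ} (p : Finset (Fin N) → Prop) [DecidablePred p] :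
    (Finset.univ.filter fun f : Fin m → Fin N => p (Rng f)).card
      = ∑ T ∈ Finset.univ.filter p,
          (Finset.univ.filter fun f : Fin m → Fin N => Rng f = T).card := by
  classical
  rw [Finset.card_eq_sum_card_fiberwise (f := Rng) (t := Finset.univ.filter p)
    (fun f hf => by simp only [Finset.mem_coe, mem_filter, mem_univ, true_and] at hf ⊢; exact hf)]
  refine Finset.sum_congr rfl fun T hT => ?_
  congr 1
  ext f
  simp only [mem_filter, mem_univ, true_and] at hT ⊢
  constructor
  · rintro ⟨_, rfl⟩; rfl
  · rintro rfl; exact ⟨hT, rfl⟩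

/-- The number of `j`-subsets of `Fin N` meeting the tail in exactly `k` elements. -/
private lemma countT {N n j k : ℕ} (hn : n ≤ N) (hkj : k ≤ j) :
    (Finset.univ.filter fun T : Finset (Fin N) =>
        T.card = j ∧ (T ∩ Tail N n).card = k).card
      = (N - n).choose k * n.choose (j - k) := by
  classical
  have htail : (Tail N n).card = N - n := tail_card hn
  have htailc : ((Tail N n)ᶜ).card = n := tail_compl_card hn
  have hcard : (Finset.univ.filter fun T : Finset (Fin N) =>
        T.card = j ∧ (T ∩ Tail N n).card = k).card
      = ((Finset.powersetCard k (Tail N n)) ×ˢ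
          (Finset.powersetCard (j - k) (Tail N n)ᶜ)).card := by
    apply Finset.card_nbij' (fun T => (T ∩ Tail N n, T \ Tail N n))
      (fun P => P.1 ∪ P.2)
    · rintro T hT
      simp only [Finset.mem_coe, mem_filter, mem_univ, true_and] at hT
      obtain ⟨hTj, hTk⟩ := hT
      simp only [Finset.mem_coe, Finset.mem_product, Finset.mem_powersetCard]
      refine ⟨⟨Finset.inter_subset_right, hTk⟩, ?_, ?_⟩
      · intro x hx
        simp only [mem_sdiff] at hx
        simp [Finset.mem_compl, hx.2]
      · have := Finset.card_inter_add_card_sdiff T (Tail N n)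
        omega
    · rintro ⟨A, B⟩ hP
      simp only [Finset.mem_coe, Finset.mem_product, Finset.mem_powersetCard] at hP
      obtain ⟨⟨hA, hAk⟩, hB, hBk⟩ := hP
      have hd : Disjoint A B := by
        refine Finset.disjoint_left.2 fun x hxA hxB => ?_
        have := hA hxA
        have := hB hxB
        simp only [Finset.mem_compl] at this
        exact this ‹x ∈ Tail N n›
      have hBT : B ∩ Tail N n = ∅ := by
        refine Finset.eq_empty_of_forall_notMem fun x hx => ?_
        simp only [mem_inter] at hx
        have := hB hx.1
        simp only [Finset.mem_compl] at this
        exact this hx.2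
      simp only [Finset.mem_coe, mem_filter, mem_univ, true_and]
      constructor
      · rw [Finset.card_union_of_disjoint hd, hAk, hBk]; omega
      · rw [Finset.union_inter_distrib_right, Finset.inter_eq_left.2 hA, hBT,
          Finset.union_empty, hAk]
    · intro T _
      dsimp only
      rw [Finset.union_comm]
      exact Finset.sdiff_union_inter T (Tail N n)
    · rintro ⟨A, B⟩ hP
      simp only [Finset.mem_coe, Finset.mem_product, Finset.mem_powersetCard] at hP
      obtain ⟨⟨hA, hAk⟩, hB, hBk⟩ := hP
      have hBT : B ∩ Tail N n = ∅ := by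
        refine Finset.eq_empty_of_forall_notMem fun x hx => ?_
        simp only [mem_inter] at hx
        have := hB hx.1
        simp only [Finset.mem_compl] at this
        exact this hx.2
      have h1 : (A ∪ B) ∩ Tail N n = A := by
        rw [Finset.union_inter_distrib_right, Finset.inter_eq_left.2 hA, hBT, Finset.union_empty]
      have h2 : (A ∪ B) \ Tail N n = B := by
        rw [Finset.union_sdiff_distrib, Finset.sdiff_eq_empty_iff_subset.2 hA,
          Finset.empty_union]
        rw [Finset.sdiff_eq_self_iff_disjoint]
        refine Finset.disjoint_left.2 fun x hxB hxT => ?_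
        have := hB hxB
        simp only [Finset.mem_compl] at this
        exact this hxT
      simp [h1, h2]
  rw [hcard, Finset.card_product, Finset.card_powersetCard, Finset.card_powersetCard,
    htail, htailc]

private lemma pp_eq (N n m j : ℕ) :
    pp N n m j
      = ((Finset.univ.filter fun f : Fin m → Fin N =>
            (Rng f ∩ Tail N n).card = j).card : ℝ) / (N : ℝ) ^ m := by
  classical
  have hset : ∀ f : Fin m → Fin N,
      (Finset.univ.filter fun x : Fin N => n ≤ (x : ℕ) ∧ ∃ y, f y = x)
        = Rng f ∩ Tail N n := by
    intro f
    ext x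
    simp [Rng, Tail, and_comm]
  unfold pp
  congr 2
  exact congrArg Finset.card (Finset.filter_congr fun f _ => by rw [hset f])

/-- The key per-`m` combinatorial identity. -/
private lemma key (N n m k : ℕ) (hn : n ≤ N) (hk : 1 ≤ k) :
    ∑ j ∈ Finset.Icc k N, pp N 0 m j *
        (((N - n).choose k : ℝ) * (n.choose (j - k) : ℝ) / (N.choose j : ℝ))
      = pp N n m k := by
  classical
  -- abbreviation for the count of functions with given range
  set A : Finset (Fin N) → ℕ :=
    fun T => (Finset.univ.filter fun f : Fin m → Fin N => Rng f = T).card with hA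
  -- the count appearing in `pp N n m k`
  have hTail0 : Tail N 0 = Finset.univ := by
    ext x; simp [Tail]
  have hcnt0 : ∀ j, (Finset.univ.filter fun f : Fin m → Fin N =>
      (Rng f ∩ Tail N 0).card = j).card
      = ∑ T ∈ Finset.univ.filter (fun T : Finset (Fin N) => T.card = j), A T := by
    intro j
    rw [hTail0]
    simp only [Finset.inter_univ]
    exact cnt_fiber (fun T => T.card = j)
  have hcntn : (Finset.univ.filter fun f : Fin m → Fin N =>
      (Rng f ∩ Tail N n).card = k).card
      = ∑ T ∈ Finset.univ.filter (fun T : Finset (Fin N) => (T ∩ Tail N n).card = k), A T :=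
    cnt_fiber (fun T => (T ∩ Tail N n).card = k)
  -- regroup the `n` count by the cardinality of `T`
  have hregroup : ∑ T ∈ Finset.univ.filter
        (fun T : Finset (Fin N) => (T ∩ Tail N n).card = k), A T
      = ∑ j ∈ Finset.Icc k N, ∑ T ∈ Finset.univ.filter
          (fun T : Finset (Fin N) => T.card = j ∧ (T ∩ Tail N n).card = k), A T := by
    rw [← Finset.sum_fiberwise_of_maps_to (g := Finset.card)
      (t := Finset.Icc k N) ?_ A]
    · refine Finset.sum_congr rfl fun j _ => ?_
      refine Finset.sum_congr ?_ fun _ _ => rfl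
      ext T
      simp only [mem_filter, mem_univ, true_and]
      tauto
    · intro T hT
      simp only [mem_filter, mem_univ, true_and] at hT
      rw [Finset.mem_Icc]
      constructor
      · rw [← hT]; exact Finset.card_le_card Finset.inter_subset_left
      · simpa using Finset.card_le_univ T
  -- per-j : everything in terms of a canonical set of size j
  have hperj : ∀ j ∈ Finset.Icc k N,
      pp N 0 m j * (((N - n).choose k : ℝ) * (n.choose (j - k) : ℝ) / (N.choose j : ℝ))
        = ((∑ T ∈ Finset.univ.filter
            (fun T : Finset (Fin N) => T.card = j ∧ (T ∩ Tail N n).card = k), A T : ℕ) : ℝ)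
            / (N : ℝ) ^ m := by
    intro j hj
    rw [Finset.mem_Icc] at hj
    obtain ⟨hkj, hjN⟩ := hj
    -- canonical subset of size j
    obtain ⟨T₀, -, hT₀⟩ := Finset.exists_subset_card_eq
      (s := (Finset.univ : Finset (Fin N))) (n := j)
      (by simpa using hjN)
    have hsum0 : ∑ T ∈ Finset.univ.filter (fun T : Finset (Fin N) => T.card = j), A T
        = N.choose j * A T₀ := by
      rw [Finset.sum_congr rfl (fun T hT => ?_), Finset.sum_const, smul_eq_mul]
      · congr 1
        have : Finset.univ.filter (fun T : Finset (Fin N) => T.card = j)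
            = Finset.powersetCard j Finset.univ := by
          ext T; simp [Finset.mem_powersetCard_univ]
        rw [this, Finset.card_powersetCard, Finset.card_univ, Fintype.card_fin]
      · simp only [mem_filter, mem_univ, true_and] at hT
        exact A_invariant (hT.trans hT₀.symm)
    have hsumn : ∑ T ∈ Finset.univ.filter
          (fun T : Finset (Fin N) => T.card = j ∧ (T ∩ Tail N n).card = k), A T
        = ((N - n).choose k * n.choose (j - k)) * A T₀ := by
      rw [Finset.sum_congr rfl (fun T hT => ?_), Finset.sum_const, smul_eq_mul]
      · rw [countT hn hkj]
      · simp only [mem_filter, mem_univ, true_and] at hT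
        exact A_invariant (hT.1.trans hT₀.symm)
    have hchoose : ((N.choose j : ℕ) : ℝ) ≠ 0 := by
      exact_mod_cast (Nat.choose_pos hjN).ne'
    rw [pp_eq, hcnt0 j, hsum0, hsumn]
    push_cast
    rw [div_mul_div_comm, mul_comm ((N : ℝ) ^ m) ((N.choose j : ℕ) : ℝ), ← div_div,
      show ((N.choose j : ℕ) : ℝ) * (A T₀ : ℝ)
            * (((N - n).choose k : ℝ) * (n.choose (j - k) : ℝ))
          = (((N - n).choose k : ℝ) * (n.choose (j - k) : ℝ) * (A T₀ : ℝ))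
            * ((N.choose j : ℕ) : ℝ) from by ring,
      mul_div_assoc, div_self hchoose, mul_one]
  rw [Finset.sum_congr rfl hperj, pp_eq, hcntn, hregroup, ← Finset.sum_div]
  push_cast
  rfl

private lemma pp_nonneg (N n m j : ℕ) : 0 ≤ pp N n m j := by
  unfold pp
  positivity

private lemma pp_le_one (N n m j : ℕ) : pp N n m j ≤ 1 := by
  unfold pp
  apply div_le_one_of_le₀
  · have h1 : (Finset.univ.filter fun f : Fin m → Fin N =>
        (Finset.univ.filter fun x : Fin N => n ≤ (x : ℕ) ∧ ∃ y, f y = x).card = j).card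
        ≤ Fintype.card (Fin m → Fin N) := Finset.card_filter_le _ _ |>.trans (by simp)
    calc ((Finset.univ.filter fun f : Fin m → Fin N =>
        (Finset.univ.filter fun x : Fin N => n ≤ (x : ℕ) ∧ ∃ y, f y = x).card = j).card : ℝ)
        ≤ (Fintype.card (Fin m → Fin N) : ℝ) := by exact_mod_cast h1
      _ = (N : ℝ) ^ m := by
          rw [Fintype.card_fun]
          push_cast
          simp
  · positivity

/-- **Equality of sampling-with-replacement and sampling-without-replacement
selection rates** (equation (4.1)): with `s̃_j := ∑_{m} s_m p^0_{mj}` and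
`q^n_{jk} := C(N-n,k)·C(n,j-k)/C(N,j)`, one has
`∑_{j=k}^{N} s̃_j q^n_{jk} = ∑_m s_m p^n_{mk}`. -/
theorem with_without_replacement (N n k : ℕ) (s : ℕ → ℝ)
    (hn : n ≤ N) (hk : 1 ≤ k)
    (hs : ∀ m, 0 ≤ s m) (hs0 : s 0 = 0) (hsum : Summable s) :
    ∑ j ∈ Finset.Icc k N,
        (∑' m : ℕ, s m * pp N 0 m j) *
          (((N - n).choose k : ℝ) * (n.choose (j - k) : ℝ) / (N.choose j : ℝ))
      = ∑' m : ℕ, s m * pp N n m k := by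
  classical
  set q : ℕ → ℝ :=
    fun j => ((N - n).choose k : ℝ) * (n.choose (j - k) : ℝ) / (N.choose j : ℝ) with hqdef
  have hq : ∀ j, 0 ≤ q j := by intro j; rw [hqdef]; positivity
  have hsummable : ∀ j ∈ Finset.Icc k N, Summable fun m => s m * pp N 0 m j * q j := by
    intro j _
    apply Summable.of_nonneg_of_le
      (fun m => by
        have := pp_nonneg N 0 m j
        have := hq j
        have := hs m
        positivity)
      (fun m => ?_) (hsum.mul_right (q j))
    calc s m * pp N 0 m j * q j ≤ s m * 1 * q j := by
          apply mul_le_mul_of_nonneg_right _ (hq j)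
          exact mul_le_mul_of_nonneg_left (pp_le_one N 0 m j) (hs m)
      _ = s m * q j := by ring
  calc ∑ j ∈ Finset.Icc k N, (∑' m : ℕ, s m * pp N 0 m j) * q j
      = ∑ j ∈ Finset.Icc k N, ∑' m : ℕ, s m * pp N 0 m j * q j := by
        refine Finset.sum_congr rfl fun j _ => ?_
        exact (tsum_mul_right).symm
    _ = ∑' m : ℕ, ∑ j ∈ Finset.Icc k N, s m * pp N 0 m j * q j := by
        exact (Summable.tsum_finsetSum hsummable).symm
    _ = ∑' m : ℕ, s m * pp N n m k := by
        refine tsum_congr fun m => ?_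
        calc ∑ j ∈ Finset.Icc k N, s m * pp N 0 m j * q j
            = s m * ∑ j ∈ Finset.Icc k N, pp N 0 m j * q j := by
              rw [Finset.mul_sum]
              refine Finset.sum_congr rfl fun j _ => by ring
          _ = s m * pp N n m k := by rw [key N n m k hn hk]

end
end
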